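/- arXiv:2006.15856 — 2 statements merged into one kernel-verified Lean document; each statement's English description precedes it below -/
import Mathlib

section
/- For b ≥ 3, Σ_{n ≤ x} h_b(n) = (ζ(2b−1)/(2ζ(2b))) x² + O(x) as x → ∞. -/
/-!
Since `d ∣ (j, n)_b ↔ d ^ b ∣ j ∧ d ^ b ∣ n`, Gauss' identity `∑_{d ∣ m} φ d = m` gives
`(j, n)_b = ∑_{d ^ b ∣ j, d ^ b ∣ n} φ d`, hence `h_b(n) = ∑_{d ^ b ∣ n} φ(d) n / d ^ b` and
`∑_{n ≤ x} h_b(n) = ∑_d φ(d) T(⌊x / d ^ b⌋)` with `T(N) = N (N + 1) / 2`.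
As `|T(⌊t⌋) - t ^ 2 / 2| ≤ t / 2`, this differs from `x ^ 2 / 2 · ∑_d φ(d) / d ^ (2b)` by at most
`x / 2 · ∑_d φ(d) / d ^ b`, a convergent series for `b ≥ 3`. Finally `φ ⋆ 1 = id` gives
`∑_d φ(d) / d ^ s = ζ(s - 1) / ζ(s)`.
-/

noncomputable def ggcd (b r s : ℕ) : ℕ := sSup {d : ℕ | 0 < d ∧ d ^ b ∣ r ∧ d ^ b ∣ s}

noncomputable def hgcd (b n : ℕ) : ℕ := ∑ j ∈ Finset.Icc 1 n, ggcd b j n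

open Finset
open scoped Nat

variable {b j n : ℕ}

lemma mem_Icc_of_pow_dvd (hb : b ≠ 0) (hn : n ≠ 0) {d : ℕ} (h : d ^ b ∣ n) : d ∈ Icc 1 n := by
  have hd : d ≠ 0 := by
    rintro rfl
    exact hn (Nat.eq_zero_of_zero_dvd (by simpa [zero_pow hb] using h))
  exact mem_Icc.2 ⟨Nat.one_le_iff_ne_zero.2 hd,
    (Nat.le_self_pow hb d).trans (Nat.le_of_dvd (Nat.pos_of_ne_zero hn) h)⟩

lemma ggcd_bddAbove (hb : b ≠ 0) (hn : n ≠ 0) :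
    BddAbove {d : ℕ | 0 < d ∧ d ^ b ∣ j ∧ d ^ b ∣ n} :=
  ⟨n, fun _ hd => (mem_Icc.1 (mem_Icc_of_pow_dvd hb hn hd.2.2)).2⟩

lemma ggcd_mem (hb : b ≠ 0) (hn : n ≠ 0) :
    ggcd b j n ∈ {d : ℕ | 0 < d ∧ d ^ b ∣ j ∧ d ^ b ∣ n} :=
  Nat.sSup_mem ⟨1, by simp⟩ (ggcd_bddAbove hb hn)

lemma dvd_ggcd_iff (hb : b ≠ 0) (hn : n ≠ 0) {d : ℕ} :
    d ∣ ggcd b j n ↔ d ^ b ∣ j ∧ d ^ b ∣ n := by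
  obtain ⟨hM, hMj, hMn⟩ := ggcd_mem (j := j) hb hn
  refine ⟨fun h => ⟨(pow_dvd_pow_of_dvd h b).trans hMj, (pow_dvd_pow_of_dvd h b).trans hMn⟩,
    fun ⟨hdj, hdn⟩ => ?_⟩
  have hd : d ≠ 0 := Nat.one_le_iff_ne_zero.1 (mem_Icc.1 (mem_Icc_of_pow_dvd hb hn hdn)).1
  have hl : 0 < d.lcm (ggcd b j n) := Nat.pos_of_ne_zero (Nat.lcm_ne_zero hd hM.ne')
  -- `lcm d (ggcd b j n)` is again admissible (`Nat.pow_lcm_pow`), hence equal to `ggcd b j n`.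
  have hle : d.lcm (ggcd b j n) ≤ ggcd b j n := le_csSup (ggcd_bddAbove hb hn)
    ⟨hl, Nat.pow_lcm_pow ▸ Nat.lcm_dvd hdj hMj, Nat.pow_lcm_pow ▸ Nat.lcm_dvd hdn hMn⟩
  have hlM : d.lcm (ggcd b j n) = ggcd b j n :=
    le_antisymm hle (Nat.le_of_dvd hl (Nat.dvd_lcm_right _ _))
  exact hlM ▸ Nat.dvd_lcm_left _ _

lemma ggcd_eq_sum_totient (hb : b ≠ 0) (hn : n ≠ 0) :
    ggcd b j n = ∑ d ∈ Icc 1 n with d ^ b ∣ j ∧ d ^ b ∣ n, φ d := by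
  rw [← Nat.sum_totient (ggcd b j n)]
  congr 1
  ext d
  simp only [Nat.mem_divisors, mem_filter, dvd_ggcd_iff hb hn, (ggcd_mem hb hn).1.ne', ne_eq,
    not_false_eq_true, and_true]
  exact ⟨fun h => ⟨mem_Icc_of_pow_dvd hb hn h.2, h⟩, And.right⟩

lemma hgcd_eq_sum_totient_mul (hb : b ≠ 0) (n : ℕ) :
    hgcd b n = ∑ d ∈ Icc 1 n with d ^ b ∣ n, φ d * (n / d ^ b) := by
  rcases eq_or_ne n 0 with rfl | hn
  · simp [hgcd]
  rw [hgcd, sum_congr rfl fun j _ => ggcd_eq_sum_totient hb hn,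
    sum_comm' (t' := {d ∈ Icc 1 n | d ^ b ∣ n}) (s' := fun d => {j ∈ Icc 1 n | d ^ b ∣ j})
      (fun j d => by simp only [mem_filter]; tauto)]
  refine sum_congr rfl fun d _ => ?_
  rw [sum_const, smul_eq_mul, mul_comm, ← zero_add 1, Icc_add_one_left_eq_Ioc,
    Nat.Ioc_filter_dvd_card_eq_div]

lemma sum_Icc_filter_dvd_div {M : Type*} [AddCommMonoid M] (f : ℕ → M) {k : ℕ} (hk : 0 < k)
    (X : ℕ) : ∑ n ∈ Icc 1 X with k ∣ n, f (n / k) = ∑ m ∈ Icc 1 (X / k), f m := by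
  refine sum_nbij' (· / k) (· * k) (fun n hn => ?_) (fun m hm => ?_) (fun n hn => ?_)
    (fun m _ => Nat.mul_div_cancel m hk) (fun _ _ => rfl)
  · obtain ⟨hn, hkn⟩ := mem_filter.1 hn
    simp only [mem_Icc] at hn ⊢
    exact ⟨(Nat.one_le_div_iff hk).2 (Nat.le_of_dvd hn.1 hkn), Nat.div_le_div_right hn.2⟩
  · simp only [mem_Icc, mem_filter] at hm ⊢
    exact ⟨⟨Nat.mul_pos hm.1 hk, (Nat.le_div_iff_mul_le hk).1 hm.2⟩, dvd_mul_left k m⟩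
  · exact Nat.div_mul_cancel (mem_filter.1 hn).2

lemma sum_hgcd_eq (hb : b ≠ 0) (X : ℕ) :
    ∑ n ∈ Icc 1 X, hgcd b n = ∑ d ∈ Icc 1 X, φ d * ∑ m ∈ Icc 1 (X / d ^ b), m := by
  simp_rw [hgcd_eq_sum_totient_mul hb]
  rw [sum_comm' (t' := Icc 1 X) (s' := fun d => {n ∈ Icc 1 X | d ^ b ∣ n}) fun n d => ?_]
  · refine sum_congr rfl fun d hd => ?_
    rw [mul_sum, sum_Icc_filter_dvd_div (φ d * ·) (pow_pos ?_ b)]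
    exact (mem_Icc.1 hd).1
  · simp only [mem_filter, mem_Icc]
    constructor
    · rintro ⟨hn, hd, hdn⟩
      exact ⟨⟨hn, hdn⟩, hd.1, hd.2.trans hn.2⟩
    · rintro ⟨⟨hn, hdn⟩, hd⟩
      exact ⟨hn, mem_Icc.1 (mem_Icc_of_pow_dvd hb (by omega) hdn), hdn⟩

lemma sum_Icc_one_natCast (N : ℕ) : ∑ m ∈ Icc 1 N, (m : ℝ) = N * (N + 1) / 2 := by
  induction N with
  | zero => simp
  | succ N ih =>
    rw [sum_Icc_succ_top (by omega), ih]
    push_cast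
    ring

lemma abs_sum_Icc_floor_sub_le {t : ℝ} (ht : 0 ≤ t) :
    |∑ m ∈ Icc 1 ⌊t⌋₊, (m : ℝ) - t ^ 2 / 2| ≤ t / 2 := by
  rw [sum_Icc_one_natCast, abs_le]
  have h₁ : (⌊t⌋₊ : ℝ) ≤ t := Nat.floor_le ht
  have h₂ : t - 1 < ⌊t⌋₊ := Nat.sub_one_lt_floor t
  constructor <;> nlinarith [Nat.cast_nonneg (α := ℝ) ⌊t⌋₊]

lemma summable_totient_div_pow {k : ℕ} (hk : 3 ≤ k) :
    Summable fun n : ℕ => (φ n : ℝ) / n ^ k := by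
  obtain ⟨m, rfl⟩ : ∃ m, k = m + 1 := ⟨k - 1, by omega⟩
  refine (Real.summable_one_div_nat_pow.2 (by omega : 1 < m)).of_nonneg_of_le
    (fun n => by positivity) fun n => ?_
  rcases eq_or_ne n 0 with rfl | hn
  · simp
  rw [div_le_div_iff₀ (by positivity) (by positivity), one_mul, pow_succ, mul_comm]
  gcongr
  exact_mod_cast Nat.totient_le n

lemma hasSum_totient_mul_sum_Icc (hb : b ≠ 0) (X : ℕ) :
    HasSum (fun d => (φ d : ℝ) * ∑ m ∈ Icc 1 (X / d ^ b), (m : ℝ))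
      (∑ n ∈ Icc 1 X, (hgcd b n : ℝ)) := by
  rw [← Nat.cast_sum, sum_hgcd_eq hb]
  push_cast
  refine hasSum_sum_of_ne_finset_zero fun d hd => ?_
  rcases eq_or_ne d 0 with rfl | hd0
  · simp
  have hX : X < d ^ b := (by simp at hd; omega : X < d).trans_le (Nat.le_self_pow hb d)
  simp [Nat.div_eq_of_lt hX]

lemma abs_sum_hgcd_sub_le (hb : 3 ≤ b) {x : ℝ} (hx : 0 ≤ x) :
    |∑ n ∈ Icc 1 ⌊x⌋₊, (hgcd b n : ℝ) - (∑' d, (φ d : ℝ) / d ^ (2 * b)) / 2 * x ^ 2| ≤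
      (∑' d, (φ d : ℝ) / d ^ b) / 2 * x := by
  have hmain : HasSum (fun d => (φ d : ℝ) * ((x / d ^ b) ^ 2 / 2))
      ((∑' d, (φ d : ℝ) / d ^ (2 * b)) / 2 * x ^ 2) := by
    have hsq : ∀ d : ℕ, (φ d : ℝ) * ((x / d ^ b) ^ 2 / 2) = φ d / d ^ (2 * b) / 2 * x ^ 2 := by
      intro d
      rw [div_pow, ← pow_mul, mul_comm b 2]
      ring
    simpa only [hsq] using
      ((summable_totient_div_pow (by omega : 3 ≤ 2 * b)).hasSum.div_const 2).mul_right (x ^ 2)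
  refine ((hasSum_totient_mul_sum_Icc (by omega) ⌊x⌋₊).sub hmain).norm_le_of_bounded
    (((summable_totient_div_pow hb).hasSum.div_const 2).mul_right x) fun d => ?_
  rw [← Nat.floor_div_natCast, Nat.cast_pow, ← mul_sub, Real.norm_eq_abs, abs_mul, Nat.abs_cast]
  calc (φ d : ℝ) * |∑ m ∈ Icc 1 ⌊x / d ^ b⌋₊, (m : ℝ) - (x / d ^ b) ^ 2 / 2|
      ≤ φ d * (x / d ^ b / 2) := by gcongr; exact abs_sum_Icc_floor_sub_le (by positivity)
    _ = φ d / d ^ b / 2 * x := by ring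

open LSeries

lemma LSeriesSummable_totient {s : ℂ} (hs : 2 < s.re) :
    LSeriesSummable (fun n => (φ n : ℂ)) s :=
  LSeriesSummable_of_le_const_mul_rpow hs ⟨1, fun n _ => by
    rw [one_mul, Complex.norm_natCast, show (2 : ℝ) - 1 = 1 by norm_num, Real.rpow_one]
    exact_mod_cast Nat.totient_le n⟩

lemma LSeries_natCast {s : ℂ} (hs : 2 < s.re) :
    LSeries (fun n => (n : ℂ)) s = riemannZeta (s - 1) := by
  rw [← LSeries_one_eq_riemannZeta (by simp; linarith)]
  refine tsum_congr fun n => ?_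
  rcases eq_or_ne n 0 with rfl | hn
  · simp
  have hn' : (n : ℂ) ≠ 0 := Nat.cast_ne_zero.2 hn
  rw [term_of_ne_zero hn, term_of_ne_zero hn, Pi.one_apply, Complex.cpow_sub _ _ hn',
    Complex.cpow_one, one_div_div]

lemma LSeries_totient {s : ℂ} (hs : 2 < s.re) :
    LSeries (fun n => (φ n : ℂ)) s = riemannZeta (s - 1) / riemannZeta s := by
  have hs₁ : 1 < s.re := by linarith
  rw [eq_div_iff (riemannZeta_ne_zero_of_one_lt_re hs₁), ← LSeries_one_eq_riemannZeta hs₁,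
    ← LSeries_convolution' (LSeriesSummable_totient hs) (LSeriesSummable_one_iff.2 hs₁),
    ← LSeries_natCast hs]
  refine LSeries_congr (fun {n} _ => ?_) s
  rw [convolution_def]
  simp only [Pi.one_apply, mul_one]
  rw [Nat.sum_divisorsAntidiagonal (fun d _ => (φ d : ℂ)), ← Nat.cast_sum, Nat.sum_totient]

lemma ofReal_tsum_totient_div_pow (k : ℕ) :
    ((∑' n, (φ n : ℝ) / n ^ k : ℝ) : ℂ) = LSeries (fun n => (φ n : ℂ)) k := by
  rw [Complex.ofReal_tsum]
  refine tsum_congr fun n => ?_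
  rcases eq_or_ne n 0 with rfl | hn
  · simp
  rw [term_of_ne_zero hn, Complex.cpow_natCast]
  push_cast
  rfl

theorem hgcd_summatory (b : ℕ) (hb : 3 ≤ b) :
    (fun x : ℝ => (∑ n ∈ Finset.Icc 1 ⌊x⌋₊, (hgcd b n : ℂ)) -
        riemannZeta (2 * b - 1) / (2 * riemannZeta (2 * b)) * (x : ℂ) ^ 2)
      =O[Filter.atTop] (fun x : ℝ => x) := by
  have hconst : riemannZeta (2 * b - 1) / (2 * riemannZeta (2 * b)) =
      (((∑' d, (φ d : ℝ) / d ^ (2 * b)) / 2 : ℝ) : ℂ) := by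
    have hs : 2 < (((2 * b : ℕ) : ℂ)).re := by simp only [Complex.natCast_re]; norm_cast; omega
    rw [Complex.ofReal_div, ofReal_tsum_totient_div_pow, LSeries_totient hs]
    push_cast
    ring
  have hbound : (fun x : ℝ => ∑ n ∈ Icc 1 ⌊x⌋₊, (hgcd b n : ℝ) -
      (∑' d, (φ d : ℝ) / d ^ (2 * b)) / 2 * x ^ 2) =O[Filter.atTop] fun x => x :=
    .of_bound _ <| (Filter.eventually_ge_atTop 0).mono fun x hx => by
      rw [Real.norm_eq_abs, Real.norm_eq_abs, abs_of_nonneg hx]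
      exact abs_sum_hgcd_sub_le hb hx
  refine (Complex.isBigO_ofReal_left.2 hbound).congr_left fun x => ?_
  rw [hconst]
  push_cast
  rfl
end

section
/- The product of generalized gcds satisfies Π_{j=1}^{n} (j,n)_b = Π_{d : d^b | n} d^{φ_b(n/d^b)}. -/
noncomputable def klee (b n : ℕ) : ℕ :=
  ((Finset.Icc 1 n).filter (fun k => ggcd b k n = 1)).card

/-!
Grouping `j ∈ [1, n]` by the value `d = (j, n)_b` turns the left side into `∏ d, d ^ (size of
the fibre over d)`. The fibre over `d` consists of the multiples `j = d ^ b * k`, and scaling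
gives `(d ^ b * k, d ^ b * m)_b = d * (k, m)_b`, so with `n = d ^ b * m` the fibre is in bijection
with `{k ∈ [1, m] : (k, m)_b = 1}`, whose size is `φ_b(m)`.
-/

open Finset

section ggcd

variable {b r s d : ℕ}

theorem bddAbove_ggcd_set (hb : b ≠ 0) (hs : s ≠ 0) :
    BddAbove {d : ℕ | 0 < d ∧ d ^ b ∣ r ∧ d ^ b ∣ s} :=
  ⟨s, fun d hd => (Nat.le_self_pow hb d).trans (Nat.le_of_dvd (Nat.pos_of_ne_zero hs) hd.2.2)⟩

theorem ggcd_mem_s15 (hb : b ≠ 0) (hs : s ≠ 0) :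
    0 < ggcd b r s ∧ ggcd b r s ^ b ∣ r ∧ ggcd b r s ^ b ∣ s :=
  Nat.sSup_mem ⟨1, by simp⟩ (bddAbove_ggcd_set hb hs)

theorem le_ggcd (hb : b ≠ 0) (hs : s ≠ 0) (hd : 0 < d) (hdr : d ^ b ∣ r) (hds : d ^ b ∣ s) :
    d ≤ ggcd b r s :=
  le_csSup (bddAbove_ggcd_set hb hs) ⟨hd, hdr, hds⟩

theorem ggcd_le_right (hb : b ≠ 0) (hs : s ≠ 0) : ggcd b r s ≤ s :=
  (Nat.le_self_pow hb _).trans (Nat.le_of_dvd (Nat.pos_of_ne_zero hs) (ggcd_mem_s15 hb hs).2.2)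

/-- The `d` with `d ^ b ∣ r` and `d ^ b ∣ s` are closed under `lcm`, since
`lcm d e ^ b = lcm (d ^ b) (e ^ b)`; so the largest of them is a multiple of all of them. -/
theorem dvd_ggcd (hb : b ≠ 0) (hs : s ≠ 0) (hdr : d ^ b ∣ r) (hds : d ^ b ∣ s) :
    d ∣ ggcd b r s := by
  obtain ⟨he, her, hes⟩ := ggcd_mem_s15 (r := r) hb hs
  set e := ggcd b r s
  have hLr : d.lcm e ^ b ∣ r := Nat.pow_lcm_pow ▸ Nat.lcm_dvd hdr her
  have hLs : d.lcm e ^ b ∣ s := Nat.pow_lcm_pow ▸ Nat.lcm_dvd hds hes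
  have hL : 0 < d.lcm e :=
    Nat.pos_of_ne_zero fun h => hs (zero_dvd_iff.1 (by simpa [h, hb] using hLs))
  have hLe : d.lcm e = e :=
    le_antisymm (le_ggcd hb hs hL hLr hLs) (Nat.le_of_dvd hL (Nat.dvd_lcm_right d e))
  exact hLe ▸ Nat.dvd_lcm_left d e

theorem ggcd_pow_mul_pow_mul (hb : b ≠ 0) (hd : 0 < d) (hs : s ≠ 0) :
    ggcd b (d ^ b * r) (d ^ b * s) = d * ggcd b r s := by
  have hdb : 0 < d ^ b := pow_pos hd b
  have hds : d ^ b * s ≠ 0 := mul_ne_zero hdb.ne' hs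
  obtain ⟨hg, hgr, hgs⟩ := ggcd_mem_s15 (r := r) hb hs
  refine le_antisymm ?_ (le_ggcd hb hds (mul_pos hd hg)
    (mul_pow d _ b ▸ mul_dvd_mul_left _ hgr) (mul_pow d _ b ▸ mul_dvd_mul_left _ hgs))
  obtain ⟨f, hf⟩ := dvd_ggcd (r := d ^ b * r) hb hds (dvd_mul_right _ _) (dvd_mul_right _ _)
  obtain ⟨hfd, hfr, hfs⟩ := ggcd_mem_s15 (r := d ^ b * r) hb hds
  rw [hf] at hfr hfs hfd ⊢
  rw [mul_pow] at hfr hfs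
  exact Nat.mul_le_mul_left d <| le_ggcd hb hs (pos_of_mul_pos_right hfd hd.le)
    (Nat.dvd_of_mul_dvd_mul_left hdb hfr) (Nat.dvd_of_mul_dvd_mul_left hdb hfs)

end ggcd

theorem card_filter_ggcd_eq {b d m : ℕ} (hb : b ≠ 0) (hd : 0 < d) (hm : m ≠ 0) :
    #{j ∈ Icc 1 (d ^ b * m) | ggcd b j (d ^ b * m) = d} = klee b m := by
  have hdb : 0 < d ^ b := pow_pos hd b
  have hscale : ∀ k, ggcd b (d ^ b * k) (d ^ b * m) = d ↔ ggcd b k m = 1 := fun k => by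
    rw [ggcd_pow_mul_pow_mul hb hd hm]
    exact mul_eq_left₀ hd.ne'
  have hbounds : ∀ k, d ^ b * k ∈ Icc 1 (d ^ b * m) ↔ k ∈ Icc 1 m := fun k => by
    simp only [mem_Icc, Nat.one_le_iff_ne_zero, mul_ne_zero_iff, hdb.ne', ne_eq, not_false_eq_true,
      true_and, Nat.mul_le_mul_left_iff hdb]
  have hfibre : {j ∈ Icc 1 (d ^ b * m) | ggcd b j (d ^ b * m) = d} =
      {k ∈ Icc 1 m | ggcd b k m = 1}.map ⟨(d ^ b * ·), mul_right_injective₀ hdb.ne'⟩ := by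
    ext j
    simp only [mem_filter, mem_map, Function.Embedding.coeFn_mk]
    constructor
    · rintro ⟨hj, hjd⟩
      obtain ⟨k, rfl⟩ : d ^ b ∣ j := hjd ▸ (ggcd_mem_s15 hb (mul_ne_zero hdb.ne' hm)).2.1
      exact ⟨k, ⟨(hbounds k).1 hj, (hscale k).1 hjd⟩, rfl⟩
    · rintro ⟨k, ⟨hk, hkm⟩, rfl⟩
      exact ⟨(hbounds k).2 hk, (hscale k).2 hkm⟩
  rw [hfibre, card_map, klee]

theorem prod_ggcd_eq_general (b n : ℕ) (hb : 2 ≤ b) :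
    ∏ j ∈ Finset.Icc 1 n, ggcd b j n =
      ∏ d ∈ (Finset.Icc 1 n).filter (fun d => d ^ b ∣ n),
        d ^ klee b (n / d ^ b) := by
  have hb0 : b ≠ 0 := by omega
  have hmaps : ∀ j ∈ Icc 1 n, ggcd b j n ∈ {d ∈ Icc 1 n | d ^ b ∣ n} := fun j hj => by
    have hn : n ≠ 0 := by rw [mem_Icc] at hj; omega
    obtain ⟨hg, -, hgn⟩ := ggcd_mem_s15 (r := j) hb0 hn
    exact mem_filter.2 ⟨mem_Icc.2 ⟨hg, ggcd_le_right hb0 hn⟩, hgn⟩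
  rw [← prod_fiberwise_of_maps_to hmaps]
  refine prod_congr rfl fun d hdt => ?_
  obtain ⟨⟨hd, hdn⟩, m, rfl⟩ := by simpa only [mem_filter, mem_Icc] using hdt
  have hm : m ≠ 0 := by rintro rfl; simp at hdn; omega
  rw [prod_congr rfl fun j hj => (mem_filter.1 hj).2, prod_const,
    card_filter_ggcd_eq hb0 hd hm, Nat.mul_div_cancel_left _ (pow_pos hd b)]

theorem prod_ggcd_eq (b n : ℕ) (hb : 2 ≤ b) (hn : 1 ≤ n) :
    ∏ j ∈ Finset.Icc 1 n, ggcd b j n =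
      ∏ d ∈ (Finset.Icc 1 n).filter (fun d => d ^ b ∣ n),
        d ^ klee b (n / d ^ b) :=
  prod_ggcd_eq_general b n hb
end
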